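/- Fix n ≥ 1, δ ∈ (0,1), ε ∈ (0,1], and a probability distribution ν on {0,1}^n satisfying D(ν‖U) ≤ ln(3/δ) (as holds with probability at least 1−δ for the output distribution of a random circuit drawn from a 2^{−2n−1}-approximate 2-design). Define the mirror descent iterates μ_0 = U and, for 1 ≤ s ≤ t, μ_s(x) = exp(−(ε/4)·Σ_{i=1}^{s} f_i(x)) / Z_s with Z_s = Σ_{x∈{0,1}^n} exp(−(ε/4)·Σ_{i=1}^{s} f_i(x)), where f_1,…,f_t : {0,1}^n → [0,1] satisfy E_{μ_{i−1}}[f_i] − E_ν[f_i] ≥ ε for every 1 ≤ i ≤ t. Then: (i) t ≤ 16·ε^{−2}·ln(3/δ); (ii) ‖ν − μ_t‖_TV ≤ √(2·(ln(3/δ) − t·ε²/16)); and (iii) the rejection-sampling constant satisfies 2^n / Z_t ≤ exp(4·ln(3/δ)/ε), so the expected number of rejection-sampling trials needed to sample from μ_t is at most exp(4·ln(3/δ)/ε). -/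

import Mathlib

open Finset

noncomputable section

/-- Expectation of `f` under a distribution `μ` on a finite type. -/
def expect {S : Type*} [Fintype S] (μ f : S → ℝ) : ℝ := ∑ x, μ x * f x

/-- Relative entropy (KL divergence, natural logarithm). -/
def klDiv {S : Type*} [Fintype S] (ν μ : S → ℝ) : ℝ := ∑ x, ν x * Real.log (ν x / μ x)

/-- Total variation distance. -/
def tvDist {S : Type*} [Fintype S] (μ ν : S → ℝ) : ℝ := (1 / 2) * ∑ x, |μ x - ν x|

/-- `μ` is a probability distribution on the finite type `S`. -/
def IsProbDist {S : Type*} [Fintype S] (μ : S → ℝ) : Prop :=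
  (∀ x, 0 ≤ μ x) ∧ ∑ x, μ x = 1

/-- The uniform distribution on `{0,1}^n`. -/
def uniformBn (n : ℕ) : (Fin n → Bool) → ℝ := fun _ => ((2 : ℝ) ^ n)⁻¹

/-- The `s`-th mirror descent iterate: the Gibbs distribution
`μ_s(x) = exp(-(ε/4)·∑_{i<s} f_i(x)) / Z_s`.  For `s = 0` this is the uniform
distribution on `{0,1}^n`. -/
def mdIter (n : ℕ) (ε : ℝ) (f : ℕ → (Fin n → Bool) → ℝ) (s : ℕ) :
    (Fin n → Bool) → ℝ :=
  fun x => Real.exp (-(ε / 4) * ∑ i ∈ Finset.range s, f i x) /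
    ∑ y, Real.exp (-(ε / 4) * ∑ i ∈ Finset.range s, f i y)

/-!
The potential is `D(ν‖μ_s)`. For a Gibbs distribution `μ_s ∝ exp(-η F_s)` with `η = ε/4` one
has `D(ν‖μ_s) = -H(ν) + η E_ν[F_s] + log Z_s`, and `exp(-a) ≤ 1 - a + a²` gives
`log Z_{s+1} ≤ log Z_s - η E_{μ_s}[f_s] + η²`. So every round in which `f_s` separates `μ_s`
from `ν` by `ε` lowers the potential by at least `ηε - η² = 3ε²/16`. The potential starts at
`D(ν‖U) ≤ ln(3/δ)` and stays nonnegative, which bounds `t` and `D(ν‖μ_t)`; the Hellinger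
estimate `TV² ≤ ∑ (√ν - √μ)² ≤ D` then gives (ii). For (iii), comparing the potential at
`s = 0` and `s = t` gives `log (2^n / Z_t) ≤ D(ν‖U) + η E_ν[F_t]`, where `E_ν[f_i] ≤ 1 - ε`.
-/

section Expectation

variable {S : Type*} [Fintype S]

lemma expect_add (μ f g : S → ℝ) : expect μ (f + g) = expect μ f + expect μ g := by
  simp only [_root_.expect, Pi.add_apply, mul_add, Finset.sum_add_distrib]

lemma expect_sum {ι : Type*} (μ : S → ℝ) (s : Finset ι) (f : ι → S → ℝ) :
    expect μ (fun x => ∑ i ∈ s, f i x) = ∑ i ∈ s, expect μ (f i) := by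
  simp only [_root_.expect, Finset.mul_sum]
  exact Finset.sum_comm

lemma expect_le_of_forall_le {μ f : S → ℝ} (hμ : IsProbDist μ) {c : ℝ} (hf : ∀ x, f x ≤ c) :
    expect μ f ≤ c :=
  calc expect μ f ≤ ∑ x, μ x * c :=
        Finset.sum_le_sum fun x _ => mul_le_mul_of_nonneg_left (hf x) (hμ.1 x)
    _ = c := by rw [← Finset.sum_mul, hμ.2, one_mul]

end Expectation

section Divergences

variable {S : Type*} [Fintype S]

lemma sq_sqrt_sub_sqrt_le {a b : ℝ} (ha : 0 ≤ a) (hb : 0 < b) :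
    (√a - √b) ^ 2 ≤ a * Real.log (a / b) - a + b := by
  rcases ha.eq_or_lt with rfl | ha
  · simp [Real.sq_sqrt hb.le]
  have hsa := Real.sqrt_pos.2 ha
  have hsb := Real.sqrt_pos.2 hb
  have hlog : Real.log (a / b) = -2 * Real.log (√b / √a) := by
    rw [Real.log_div ha.ne' hb.ne', Real.log_div hsb.ne' hsa.ne', Real.log_sqrt ha.le,
      Real.log_sqrt hb.le]
    ring
  have hmul : a * (√b / √a) = √a * √b := by
    rw [mul_div_assoc', mul_comm, mul_div_assoc, Real.div_sqrt, mul_comm]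
  have key := mul_le_mul_of_nonneg_left (Real.log_le_sub_one_of_pos (div_pos hsb hsa)) ha.le
  rw [sub_sq, Real.sq_sqrt ha.le, Real.sq_sqrt hb.le, hlog]
  nlinarith

lemma sum_sq_sqrt_sub_le_klDiv {ν μ : S → ℝ} (hν : IsProbDist ν) (hμ : IsProbDist μ)
    (hμ_pos : ∀ x, 0 < μ x) : ∑ x, (√(ν x) - √(μ x)) ^ 2 ≤ klDiv ν μ :=
  calc ∑ x, (√(ν x) - √(μ x)) ^ 2 ≤ ∑ x, (ν x * Real.log (ν x / μ x) - ν x + μ x) :=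
        Finset.sum_le_sum fun x _ => sq_sqrt_sub_sqrt_le (hν.1 x) (hμ_pos x)
    _ = klDiv ν μ := by
        rw [Finset.sum_add_distrib, Finset.sum_sub_distrib, hν.2, hμ.2, klDiv]
        ring

lemma klDiv_nonneg {ν μ : S → ℝ} (hν : IsProbDist ν) (hμ : IsProbDist μ)
    (hμ_pos : ∀ x, 0 < μ x) : 0 ≤ klDiv ν μ :=
  (Finset.sum_nonneg fun _ _ => sq_nonneg _).trans (sum_sq_sqrt_sub_le_klDiv hν hμ hμ_pos)

lemma tvDist_sq_le_sum_sq_sqrt_sub {ν μ : S → ℝ} (hν : IsProbDist ν) (hμ : IsProbDist μ) :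
    tvDist ν μ ^ 2 ≤ ∑ x, (√(ν x) - √(μ x)) ^ 2 := by
  have hfactor : ∀ x, |ν x - μ x| = |√(ν x) - √(μ x)| * (√(ν x) + √(μ x)) := fun x => by
    rw [← abs_of_nonneg (by positivity : 0 ≤ √(ν x) + √(μ x)), ← abs_mul, mul_comm,
      ← sq_sub_sq, Real.sq_sqrt (hν.1 x), Real.sq_sqrt (hμ.1 x)]
  have hsum : ∑ x, (√(ν x) + √(μ x)) ^ 2 ≤ 4 :=
    calc ∑ x, (√(ν x) + √(μ x)) ^ 2 ≤ ∑ x, 2 * (ν x + μ x) :=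
          Finset.sum_le_sum fun x _ => by
            nlinarith [sq_nonneg (√(ν x) - √(μ x)), Real.sq_sqrt (hν.1 x), Real.sq_sqrt (hμ.1 x)]
      _ = 4 := by rw [← Finset.mul_sum, Finset.sum_add_distrib, hν.2, hμ.2]; norm_num
  have hcs := Finset.sum_mul_sq_le_sq_mul_sq Finset.univ
    (fun x => |√(ν x) - √(μ x)|) (fun x => √(ν x) + √(μ x))
  simp only [sq_abs] at hcs
  have hH : 0 ≤ ∑ x, (√(ν x) - √(μ x)) ^ 2 := Finset.sum_nonneg fun _ _ => sq_nonneg _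
  rw [tvDist, Finset.sum_congr rfl fun x _ => hfactor x]
  nlinarith [mul_le_mul_of_nonneg_left hsum hH]

lemma tvDist_sq_le_klDiv {ν μ : S → ℝ} (hν : IsProbDist ν) (hμ : IsProbDist μ)
    (hμ_pos : ∀ x, 0 < μ x) : tvDist ν μ ^ 2 ≤ klDiv ν μ :=
  (tvDist_sq_le_sum_sq_sqrt_sub hν hμ).trans (sum_sq_sqrt_sub_le_klDiv hν hμ hμ_pos)

end Divergences

section Gibbs

variable {S : Type*} [Fintype S]

def partitionFn (η : ℝ) (F : S → ℝ) : ℝ := ∑ y, Real.exp (-η * F y)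

def gibbs (η : ℝ) (F : S → ℝ) : S → ℝ := fun x => Real.exp (-η * F x) / partitionFn η F

lemma partitionFn_zero (η : ℝ) : partitionFn η (0 : S → ℝ) = Fintype.card S := by
  simp [partitionFn]

lemma gibbs_zero (η : ℝ) : gibbs η (0 : S → ℝ) = fun _ => (Fintype.card S : ℝ)⁻¹ := by
  funext x
  simp [gibbs, partitionFn_zero]

variable [Nonempty S]

lemma partitionFn_pos (η : ℝ) (F : S → ℝ) : 0 < partitionFn η F :=
  Finset.sum_pos (fun _ _ => Real.exp_pos _) Finset.univ_nonempty

lemma gibbs_pos (η : ℝ) (F : S → ℝ) (x : S) : 0 < gibbs η F x :=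
  div_pos (Real.exp_pos _) (partitionFn_pos η F)

lemma isProbDist_gibbs (η : ℝ) (F : S → ℝ) : IsProbDist (gibbs η F) :=
  ⟨fun x => (gibbs_pos η F x).le, by
    simp only [gibbs, ← Finset.sum_div]
    exact div_self (partitionFn_pos η F).ne'⟩

lemma sum_exp_mul_eq_partitionFn_mul_expect (η : ℝ) (F g : S → ℝ) :
    ∑ x, Real.exp (-η * F x) * g x = partitionFn η F * expect (gibbs η F) g := by
  simp only [_root_.expect, gibbs, Finset.mul_sum]
  refine Finset.sum_congr rfl fun x _ => ?_
  field_simp [(partitionFn_pos η F).ne']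

lemma klDiv_gibbs {ν : S → ℝ} (hν : IsProbDist ν) (η : ℝ) (F : S → ℝ) :
    klDiv ν (gibbs η F) =
      ∑ x, ν x * Real.log (ν x) + η * expect ν F + Real.log (partitionFn η F) := by
  have hZ := partitionFn_pos η F
  have hterm : ∀ x, ν x * Real.log (ν x / gibbs η F x) =
      ν x * Real.log (ν x) + η * (ν x * F x) + ν x * Real.log (partitionFn η F) := fun x => by
    rcases (hν.1 x).eq_or_lt with h | h
    · simp [← h]
    · rw [Real.log_div h.ne' (gibbs_pos η F x).ne', gibbs,
        Real.log_div (Real.exp_pos _).ne' hZ.ne', Real.log_exp]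
      ring
  rw [klDiv, Finset.sum_congr rfl fun x _ => hterm x, Finset.sum_add_distrib,
    Finset.sum_add_distrib, ← Finset.mul_sum, ← Finset.sum_mul, hν.2, one_mul, _root_.expect]

lemma exp_neg_mul_le {η y : ℝ} (hη : |η| ≤ 1) (hy : |y| ≤ 1) :
    Real.exp (-η * y) ≤ 1 - η * y + η ^ 2 := by
  have hηy : |-η * y| ≤ 1 := by
    rw [abs_mul, abs_neg]
    exact mul_le_one₀ hη (abs_nonneg y) hy
  have hy2 : y ^ 2 ≤ 1 := (sq_le_one_iff_abs_le_one y).2 hy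
  have := (abs_le.1 (Real.abs_exp_sub_one_sub_id_le hηy)).2
  nlinarith [sq_nonneg η]

lemma log_partitionFn_add_le {η : ℝ} (hη : |η| ≤ 1) (F : S → ℝ) {g : S → ℝ}
    (hg : ∀ x, |g x| ≤ 1) :
    Real.log (partitionFn η (F + g)) ≤
      Real.log (partitionFn η F) - η * expect (gibbs η F) g + η ^ 2 := by
  have hZ := partitionFn_pos η F
  set E := expect (gibbs η F) g
  have hbound : partitionFn η (F + g) ≤ partitionFn η F * Real.exp (-η * E + η ^ 2) :=
    calc partitionFn η (F + g)
        ≤ ∑ x, Real.exp (-η * F x) * (1 - η * g x + η ^ 2) :=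
          Finset.sum_le_sum fun x _ => by
            rw [Pi.add_apply, mul_add, Real.exp_add]
            exact mul_le_mul_of_nonneg_left (exp_neg_mul_le hη (hg x)) (Real.exp_pos _).le
      _ = partitionFn η F * (1 - η * E + η ^ 2) := by
          have hsplit : ∀ x, Real.exp (-η * F x) * (1 - η * g x + η ^ 2) =
              (1 + η ^ 2) * Real.exp (-η * F x) - η * (Real.exp (-η * F x) * g x) :=
            fun x => by ring
          simp only [hsplit, Finset.sum_sub_distrib, ← Finset.mul_sum,
            sum_exp_mul_eq_partitionFn_mul_expect]
          rw [← partitionFn]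
          ring
      _ ≤ partitionFn η F * Real.exp (-η * E + η ^ 2) := by
          gcongr
          linarith [Real.add_one_le_exp (-η * E + η ^ 2)]
  calc Real.log (partitionFn η (F + g))
      ≤ Real.log (partitionFn η F * Real.exp (-η * E + η ^ 2)) :=
        Real.log_le_log (partitionFn_pos η _) hbound
    _ = Real.log (partitionFn η F) - η * E + η ^ 2 := by
        rw [Real.log_mul hZ.ne' (Real.exp_pos _).ne', Real.log_exp]
        ring

lemma klDiv_gibbs_add_le {ν : S → ℝ} (hν : IsProbDist ν) {η : ℝ} (hη : |η| ≤ 1)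
    (F : S → ℝ) {g : S → ℝ} (hg : ∀ x, |g x| ≤ 1) :
    klDiv ν (gibbs η (F + g)) ≤
      klDiv ν (gibbs η F) - η * (expect (gibbs η F) g - expect ν g) + η ^ 2 := by
  rw [klDiv_gibbs hν, klDiv_gibbs hν, expect_add]
  linarith [log_partitionFn_add_le hη F hg]

lemma log_card_div_partitionFn_le {ν : S → ℝ} (hν : IsProbDist ν) (η : ℝ) (F : S → ℝ) :
    Real.log (Fintype.card S / partitionFn η F) ≤ klDiv ν (gibbs η 0) + η * expect ν F := by
  have h0 := klDiv_gibbs hν η 0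
  have hF := klDiv_gibbs hν η F
  have hpos := klDiv_nonneg hν (isProbDist_gibbs η F) (gibbs_pos η F)
  rw [partitionFn_zero] at h0
  rw [Real.log_div (by positivity) (partitionFn_pos η F).ne']
  simp only [_root_.expect, Pi.zero_apply, mul_zero, Finset.sum_const_zero] at h0
  linarith

lemma klDiv_gibbs_sum_add_le {ν : S → ℝ} (hν : IsProbDist ν) {η γ : ℝ} (hη0 : 0 ≤ η)
    (hη1 : η ≤ 1) {t : ℕ} {f : ℕ → S → ℝ} (hf : ∀ i < t, ∀ x, |f i x| ≤ 1)
    (hsep : ∀ i < t,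
      γ ≤ expect (gibbs η fun x => ∑ j ∈ Finset.range i, f j x) (f i) - expect ν (f i)) :
    ∀ s ≤ t, klDiv ν (gibbs η fun x => ∑ j ∈ Finset.range s, f j x) + s * (η * γ - η ^ 2) ≤
      klDiv ν (gibbs η 0) := by
  intro s
  induction s with
  | zero => intro; simp [Pi.zero_def]
  | succ s ih =>
    intro hs
    have hsucc : (fun x => ∑ j ∈ Finset.range (s + 1), f j x) =
        (fun x => ∑ j ∈ Finset.range s, f j x) + f s :=
      funext fun x => Finset.sum_range_succ _ _
    have hstep := klDiv_gibbs_add_le hν (abs_le.2 ⟨by linarith, hη1⟩)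
      (fun x => ∑ j ∈ Finset.range s, f j x) (hf s hs)
    have hgain := mul_le_mul_of_nonneg_left (hsep s hs) hη0
    rw [hsucc]
    push_cast
    linarith [ih (Nat.le_of_succ_le hs)]

end Gibbs

lemma gibbs_zero_eq_uniformBn (n : ℕ) (η : ℝ) :
    gibbs η (0 : (Fin n → Bool) → ℝ) = uniformBn n := by
  ext
  simp [gibbs_zero, uniformBn]

lemma isProbDist_mdIter (n : ℕ) (ε : ℝ) (f : ℕ → (Fin n → Bool) → ℝ) (s : ℕ) :
    IsProbDist (mdIter n ε f s) :=
  isProbDist_gibbs (ε / 4) fun x => ∑ i ∈ Finset.range s, f i x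

lemma mdIter_pos (n : ℕ) (ε : ℝ) (f : ℕ → (Fin n → Bool) → ℝ) (s : ℕ) (x : Fin n → Bool) :
    0 < mdIter n ε f s x :=
  gibbs_pos (ε / 4) (fun x => ∑ i ∈ Finset.range s, f i x) x

lemma two_pow_div_partitionFn_le {n : ℕ} {ν : (Fin n → Bool) → ℝ} (hν : IsProbDist ν)
    {ε L : ℝ} (hε0 : 0 < ε) (hε1 : ε ≤ 1) (hent : klDiv ν (uniformBn n) ≤ L)
    {t : ℕ} (ht : t * ε ^ 2 ≤ 16 * L) {f : ℕ → (Fin n → Bool) → ℝ}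
    (hf : ∀ i < t, ∀ x, f i x ≤ 1)
    (hsep : ∀ i < t, ε ≤ expect (mdIter n ε f i) (f i) - expect ν (f i)) :
    (2 : ℝ) ^ n / partitionFn (ε / 4) (fun x => ∑ i ∈ Finset.range t, f i x) ≤
      Real.exp (4 * L / ε) := by
  have hνf : expect ν (fun x => ∑ i ∈ Finset.range t, f i x) ≤ t * (1 - ε) :=
    calc expect ν (fun x => ∑ i ∈ Finset.range t, f i x)
        ≤ ∑ i ∈ Finset.range t, (1 - ε) := by
          rw [expect_sum]
          refine Finset.sum_le_sum fun i hi => ?_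
          have hi := Finset.mem_range.1 hi
          linarith [hsep i hi, expect_le_of_forall_le (isProbDist_mdIter n ε f i) (hf i hi)]
      _ = t * (1 - ε) := by rw [Finset.sum_const, Finset.card_range, nsmul_eq_mul]
  have hlog := log_card_div_partitionFn_le hν (ε / 4) fun x => ∑ i ∈ Finset.range t, f i x
  rw [gibbs_zero_eq_uniformBn] at hlog
  simp only [Fintype.card_fun, Fintype.card_bool, Fintype.card_fin, Nat.cast_pow,
    Nat.cast_ofNat] at hlog
  rw [← Real.log_le_iff_le_exp (div_pos (by positivity) (partitionFn_pos _ _)),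
    le_div_iff₀ hε0]
  have hL : 0 ≤ L := by
    have hU := klDiv_nonneg hν (isProbDist_gibbs (ε / 4) 0) (gibbs_pos (ε / 4) 0)
    rw [gibbs_zero_eq_uniformBn] at hU
    linarith
  nlinarith [mul_le_mul_of_nonneg_right ht (by linarith : 0 ≤ 1 - ε), mul_nonneg hε0.le hL]

theorem verification_game_random_circuits_general (n : ℕ)
    (δ : ℝ)
    (ε : ℝ) (hε : ε ∈ Set.Ioc (0 : ℝ) 1)
    (ν : (Fin n → Bool) → ℝ) (hν : IsProbDist ν)
    (hent : klDiv ν (uniformBn n) ≤ Real.log (3 / δ))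
    (t : ℕ) (f : ℕ → (Fin n → Bool) → ℝ)
    (hf : ∀ i < t, ∀ x, f i x ∈ Set.Icc (0 : ℝ) 1)
    (hsep : ∀ i < t, expect (mdIter n ε f i) (f i) - expect ν (f i) ≥ ε) :
    (t : ℝ) ≤ 16 / ε ^ 2 * Real.log (3 / δ) ∧
      tvDist ν (mdIter n ε f t) ≤
        Real.sqrt (2 * (Real.log (3 / δ) - t * ε ^ 2 / 16)) ∧
      (2 : ℝ) ^ n / (∑ x, Real.exp (-(ε / 4) * ∑ i ∈ Finset.range t, f i x)) ≤
        Real.exp (4 * Real.log (3 / δ) / ε) := by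
  obtain ⟨hε0, hε1⟩ := hε
  set L := Real.log (3 / δ)
  have hf_abs : ∀ i < t, ∀ x, |f i x| ≤ 1 := fun i hi x =>
    abs_le.2 ⟨by linarith [(hf i hi x).1], (hf i hi x).2⟩
  have hdesc : klDiv ν (mdIter n ε f t) + t * (ε / 4 * ε - (ε / 4) ^ 2) ≤ L := by
    have h := klDiv_gibbs_sum_add_le hν (by positivity) (by linarith) hf_abs hsep t le_rfl
    rw [gibbs_zero_eq_uniformBn] at h
    exact h.trans hent
  have hKL := klDiv_nonneg hν (isProbDist_mdIter n ε f t) (mdIter_pos n ε f t)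
  have hgain : t * ε ^ 2 / 16 ≤ t * (ε / 4 * ε - (ε / 4) ^ 2) := by
    have : (0 : ℝ) ≤ t * ε ^ 2 := by positivity
    linarith
  have ht : t * ε ^ 2 ≤ 16 * L := by linarith
  refine ⟨?_, ?_, two_pow_div_partitionFn_le hν hε0 hε1 hent ht (fun i hi x => (hf i hi x).2) hsep⟩
  · rw [div_mul_eq_mul_div, le_div_iff₀ (by positivity)]
    linarith
  · apply Real.le_sqrt_of_sq_le
    linarith [tvDist_sq_le_klDiv hν (isProbDist_mdIter n ε f t) (mdIter_pos n ε f t)]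

/-- Against a high-entropy (random-circuit) distribution `ν` with
`D(ν‖U) ≤ ln(3/δ)`, the verification game with mirror descent updates lasts at most
`16 ε⁻² ln(3/δ)` rounds, ends with an iterate close to `ν` in total variation, and
the final iterate can be rejection-sampled in at most `exp(4 ln(3/δ)/ε)` expected
trials. -/
theorem verification_game_random_circuits (n : ℕ) (hn : 1 ≤ n)
    (δ : ℝ) (hδ : δ ∈ Set.Ioo (0 : ℝ) 1)
    (ε : ℝ) (hε : ε ∈ Set.Ioc (0 : ℝ) 1)
    (ν : (Fin n → Bool) → ℝ) (hν : IsProbDist ν)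
    (hent : klDiv ν (uniformBn n) ≤ Real.log (3 / δ))
    (t : ℕ) (f : ℕ → (Fin n → Bool) → ℝ)
    (hf : ∀ i < t, ∀ x, f i x ∈ Set.Icc (0 : ℝ) 1)
    (hsep : ∀ i < t, expect (mdIter n ε f i) (f i) - expect ν (f i) ≥ ε) :
    (t : ℝ) ≤ 16 / ε ^ 2 * Real.log (3 / δ) ∧
      tvDist ν (mdIter n ε f t) ≤
        Real.sqrt (2 * (Real.log (3 / δ) - t * ε ^ 2 / 16)) ∧
      (2 : ℝ) ^ n / (∑ x, Real.exp (-(ε / 4) * ∑ i ∈ Finset.range t, f i x)) ≤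
        Real.exp (4 * Real.log (3 / δ) / ε) :=
  verification_game_random_circuits_general n δ ε hε ν hν hent t f hf hsep
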